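/- arXiv:2504.21729 — 3 statements merged into one kernel-verified Lean document; each statement's English description precedes it below -/
import Mathlib

section
/- Let X and Y be complex Banach spaces, and let K₁ : X → X, K₂ : Y → X, K₃ : X → Y, K₄ : Y → Y be bounded linear operators whose operator norms satisfy ‖K₁‖ < 1, ‖K₄‖ < 1, and ‖K₂‖·‖K₃‖ < (1 − ‖K₁‖)(1 − ‖K₄‖). Then the operator I + 𝒦 on X × Y, where 𝒦(x, y) = (K₁x + K₂y, K₃x + K₄y), is invertible as a bounded linear operator on X × Y. -/
/- STATEMENT 0: If `K₁ : X → X`, `K₂ : Y → X`, `K₃ : X → Y`, `K₄ : Y → Y` are bounded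
linear operators on complex Banach spaces with `‖K₁‖ < 1`, `‖K₄‖ < 1` and
`‖K₂‖·‖K₃‖ < (1 − ‖K₁‖)(1 − ‖K₄‖)`, then `I + 𝒦` is invertible on `X × Y`, where
`𝒦(x, y) = (K₁ x + K₂ y, K₃ x + K₄ y)`. -/

theorem stmt0
    (X Y : Type*) [NormedAddCommGroup X] [NormedSpace ℂ X] [CompleteSpace X]
    [NormedAddCommGroup Y] [NormedSpace ℂ Y] [CompleteSpace Y]
    (K₁ : X →L[ℂ] X) (K₂ : Y →L[ℂ] X) (K₃ : X →L[ℂ] Y) (K₄ : Y →L[ℂ] Y)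
    (h₁ : ‖K₁‖ < 1) (h₄ : ‖K₄‖ < 1)
    (h₂₃ : ‖K₂‖ * ‖K₃‖ < (1 - ‖K₁‖) * (1 - ‖K₄‖)) :
    IsUnit ((1 : (X × Y) →L[ℂ] (X × Y)) +
      ((K₁.comp (ContinuousLinearMap.fst ℂ X Y) +
        K₂.comp (ContinuousLinearMap.snd ℂ X Y)).prod
       (K₃.comp (ContinuousLinearMap.fst ℂ X Y) +
        K₄.comp (ContinuousLinearMap.snd ℂ X Y)))) := by
  have h1' : (0:ℝ) < 1 - ‖K₁‖ := by linarith
  have h4' : (0:ℝ) < 1 - ‖K₄‖ := by linarith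
  set a : ℝ := ‖K₂‖ / (1 - ‖K₁‖) with ha
  have ha0 : 0 ≤ a := div_nonneg (norm_nonneg _) h1'.le
  have haK : a * ‖K₃‖ < 1 - ‖K₄‖ := by
    rw [ha, div_mul_eq_mul_div, div_lt_iff₀ h1']
    linarith [h₂₃]
  set δ : ℝ := (1 - ‖K₄‖ - a * ‖K₃‖) / (‖K₃‖ + 1) with hδ
  have hδ0 : 0 < δ := div_pos (by linarith) (by positivity)
  set t : ℝ := a + δ with htdef
  have ht0 : 0 < t := by positivity
  have hK2 : ‖K₂‖ < t * (1 - ‖K₁‖) := by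
    have : a * (1 - ‖K₁‖) = ‖K₂‖ := div_mul_cancel₀ _ h1'.ne'
    nlinarith
  have hK3 : t * ‖K₃‖ + ‖K₄‖ < 1 := by
    have : δ * (‖K₃‖ + 1) = 1 - ‖K₄‖ - a * ‖K₃‖ :=
      div_mul_cancel₀ _ (by positivity)
    nlinarith
  -- scalar
  have htc : (t : ℂ) ≠ 0 := by exact_mod_cast ht0.ne'
  set D : (X × Y) →L[ℂ] (X × Y) :=
    (1 : X →L[ℂ] X).prodMap ((t : ℂ) • (1 : Y →L[ℂ] Y)) with hD
  set D' : (X × Y) →L[ℂ] (X × Y) :=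
    (1 : X →L[ℂ] X).prodMap ((t : ℂ)⁻¹ • (1 : Y →L[ℂ] Y)) with hD'
  have hDD' : D * D' = 1 := by
    ext p <;>
      simp [hD, hD', ContinuousLinearMap.mul_apply, ← Complex.coe_smul, smul_smul,
        mul_inv_cancel₀ htc, inv_mul_cancel₀ htc]
  have hD'D : D' * D = 1 := by
    ext p <;>
      simp [hD, hD', ContinuousLinearMap.mul_apply, ← Complex.coe_smul, smul_smul,
        mul_inv_cancel₀ htc, inv_mul_cancel₀ htc]
  set 𝒦 : (X × Y) →L[ℂ] (X × Y) :=
    ((K₁.comp (ContinuousLinearMap.fst ℂ X Y) +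
        K₂.comp (ContinuousLinearMap.snd ℂ X Y)).prod
       (K₃.comp (ContinuousLinearMap.fst ℂ X Y) +
        K₄.comp (ContinuousLinearMap.snd ℂ X Y))) with h𝒦
  set 𝒦' : (X × Y) →L[ℂ] (X × Y) :=
    ((K₁.comp (ContinuousLinearMap.fst ℂ X Y) +
        (t : ℂ)⁻¹ • K₂.comp (ContinuousLinearMap.snd ℂ X Y)).prod
       ((t : ℂ) • K₃.comp (ContinuousLinearMap.fst ℂ X Y) +
        K₄.comp (ContinuousLinearMap.snd ℂ X Y))) with h𝒦'
  have hconj : D * 𝒦 * D' = 𝒦' := by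
    ext p <;>
      simp [hD, hD', h𝒦, h𝒦', ContinuousLinearMap.mul_apply, map_smul,
        ← Complex.coe_smul, smul_smul, mul_inv_cancel₀ htc, inv_mul_cancel₀ htc,
        ContinuousLinearMap.prod_apply, mul_comm]
  have hnorm : ‖𝒦'‖ < 1 := by
    have hc1 : ‖K₁‖ + t⁻¹ * ‖K₂‖ < 1 := by
      nlinarith [mul_lt_mul_of_pos_left hK2 (inv_pos.mpr ht0),
        inv_mul_cancel₀ ht0.ne']
    have hc2 : t * ‖K₃‖ + ‖K₄‖ < 1 := hK3
    set c : ℝ := max (‖K₁‖ + t⁻¹ * ‖K₂‖) (t * ‖K₃‖ + ‖K₄‖) with hc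
    have hc1' : c < 1 := max_lt hc1 hc2
    have hc0 : 0 ≤ c := le_trans (by positivity : (0:ℝ) ≤ t * ‖K₃‖ + ‖K₄‖) (le_max_right _ _)
    have hb : ‖𝒦'‖ ≤ c := by
      apply ContinuousLinearMap.opNorm_le_bound _ hc0
      rintro ⟨x, y⟩
      have hx : ‖x‖ ≤ ‖(x, y)‖ := le_max_left _ _
      have hy : ‖y‖ ≤ ‖(x, y)‖ := le_max_right _ _
      have e1 : ‖K₁ x + (t : ℂ)⁻¹ • K₂ y‖ ≤ c * ‖(x, y)‖ := by
        calc ‖K₁ x + (t : ℂ)⁻¹ • K₂ y‖ ≤ ‖K₁ x‖ + ‖(t : ℂ)⁻¹ • K₂ y‖ := norm_add_le _ _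
          _ = ‖K₁ x‖ + t⁻¹ * ‖K₂ y‖ := by
              rw [norm_smul, norm_inv, Complex.norm_real, Real.norm_eq_abs, abs_of_pos ht0]
          _ ≤ ‖K₁‖ * ‖x‖ + t⁻¹ * (‖K₂‖ * ‖y‖) :=
              add_le_add (K₁.le_opNorm x)
                (mul_le_mul_of_nonneg_left (K₂.le_opNorm y) (by positivity))
          _ ≤ ‖K₁‖ * ‖(x,y)‖ + t⁻¹ * (‖K₂‖ * ‖(x,y)‖) :=
              add_le_add (mul_le_mul_of_nonneg_left hx (norm_nonneg _))
                (mul_le_mul_of_nonneg_left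
                  (mul_le_mul_of_nonneg_left hy (norm_nonneg _)) (by positivity))
          _ = (‖K₁‖ + t⁻¹ * ‖K₂‖) * ‖(x,y)‖ := by ring
          _ ≤ c * ‖(x,y)‖ := by
              gcongr
              exact le_max_left _ _
      have e2 : ‖(t : ℂ) • K₃ x + K₄ y‖ ≤ c * ‖(x, y)‖ := by
        calc ‖(t : ℂ) • K₃ x + K₄ y‖ ≤ ‖(t : ℂ) • K₃ x‖ + ‖K₄ y‖ := norm_add_le _ _
          _ = t * ‖K₃ x‖ + ‖K₄ y‖ := by
              rw [norm_smul, Complex.norm_real, Real.norm_eq_abs, abs_of_pos ht0]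
          _ ≤ t * (‖K₃‖ * ‖x‖) + ‖K₄‖ * ‖y‖ :=
              add_le_add (mul_le_mul_of_nonneg_left (K₃.le_opNorm x) ht0.le)
                (K₄.le_opNorm y)
          _ ≤ t * (‖K₃‖ * ‖(x,y)‖) + ‖K₄‖ * ‖(x,y)‖ :=
              add_le_add
                (mul_le_mul_of_nonneg_left
                  (mul_le_mul_of_nonneg_left hx (norm_nonneg _)) ht0.le)
                (mul_le_mul_of_nonneg_left hy (norm_nonneg _))
          _ = (t * ‖K₃‖ + ‖K₄‖) * ‖(x,y)‖ := by ring
          _ ≤ c * ‖(x,y)‖ := by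
              gcongr
              exact le_max_right _ _
      have : ‖𝒦' (x, y)‖ = max ‖K₁ x + (t : ℂ)⁻¹ • K₂ y‖ ‖(t : ℂ) • K₃ x + K₄ y‖ := by
        simp [h𝒦', Prod.norm_def, ContinuousLinearMap.prod_apply]
      rw [this]
      exact max_le e1 e2
    exact lt_of_le_of_lt hb hc1'
  have hu' : IsUnit (1 + 𝒦') := by
    have h : ‖-𝒦'‖ < 1 := by rw [norm_neg]; exact hnorm
    have h2 : IsUnit (1 - -𝒦') := ⟨Units.oneSub (-𝒦') h, rfl⟩
    rwa [sub_neg_eq_add] at h2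
  have hfact : (1 : (X × Y) →L[ℂ] (X × Y)) + 𝒦 = D' * (1 + 𝒦') * D := by
    rw [← hconj]
    rw [mul_add, add_mul, mul_one, hD'D]
    congr 1
    calc 𝒦 = (D' * D) * 𝒦 * (D' * D) := by rw [hD'D]; simp
      _ = D' * (D * 𝒦 * D') * D := by simp only [mul_assoc]
  rw [hfact]
  have huD : IsUnit D := by
    refine ⟨⟨D, D', ?_, ?_⟩, rfl⟩
    · exact hDD'
    · exact hD'D
  have huD' : IsUnit D' := by
    refine ⟨⟨D', D, ?_, ?_⟩, rfl⟩
    · exact hD'D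
    · exact hDD'
  exact (huD'.mul hu').mul huD
end

section
/- Let ξ ∈ ℝ³ with ξ ≠ 0, and let N₁(ξ) be the linear operator on ℂ³_ξ × ℂ³_ξ defined by N₁(ξ)(X, Y) = (iξ × Y, −iξ × X). Then for every λ ∈ ℂ with λ ≠ i|ξ| and λ ≠ −i|ξ|, the operator λ − N₁(ξ) is invertible on ℂ³_ξ × ℂ³_ξ, and its inverse has operator norm ‖(λ − N₁(ξ))^{−1}‖ = max_{j = ±1} |λ − j i|ξ||^{−1}, where the operator norm is taken with respect to the standard Hermitian norm on ℂ³ × ℂ³ restricted to ℂ³_ξ × ℂ³_ξ. -/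
noncomputable section

/-- The cross product `ξ × b` of a real vector `ξ ∈ ℝ³` with a complex vector `b ∈ ℂ³`,
taken componentwise. -/
def crossRC (ξ : EuclideanSpace ℝ (Fin 3)) (b : EuclideanSpace ℂ (Fin 3)) :
    EuclideanSpace ℂ (Fin 3) :=
  (WithLp.equiv 2 (Fin 3 → ℂ)).symm
    ![(ξ 1 : ℂ) * b 2 - (ξ 2 : ℂ) * b 1,
      (ξ 2 : ℂ) * b 0 - (ξ 0 : ℂ) * b 2,
      (ξ 0 : ℂ) * b 1 - (ξ 1 : ℂ) * b 0]

/-- The (non-conjugated) dot product `y · ξ` of a complex vector with a real vector, as a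
linear functional on `ℂ³`. -/
def dotLin (ξ : EuclideanSpace ℝ (Fin 3)) : EuclideanSpace ℂ (Fin 3) →ₗ[ℂ] ℂ where
  toFun y := ∑ i, y i * (ξ i : ℂ)
  map_add' y z := by
    simp [PiLp.add_apply, add_mul, Finset.sum_add_distrib]
  map_smul' c y := by
    simp [PiLp.smul_apply, Finset.mul_sum, mul_assoc, smul_eq_mul]

/-- `ℂ³_ξ = {y ∈ ℂ³ : y·ξ = 0}`, as a subspace of `ℂ³` with the standard Hermitian norm. -/
def Cxi (ξ : EuclideanSpace ℝ (Fin 3)) : Submodule ℂ (EuclideanSpace ℂ (Fin 3)) :=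
  LinearMap.ker (dotLin ξ)

/-- `ℂ³_ξ × ℂ³_ξ`, normed with the Hermitian (ℓ²) norm of `ℂ³ × ℂ³` restricted to it. -/
abbrev CxiProd (ξ : EuclideanSpace ℝ (Fin 3)) :=
  WithLp 2 (Cxi ξ × Cxi ξ)

/-! The operator `N = N₁(ξ)` is skew-adjoint and, since `ξ × (ξ × y) = -|ξ|² y` for `y · ξ = 0`,
satisfies `N² = -|ξ|²`. Hence `λ - N` is inverted by `(λ² + |ξ|²)⁻¹ (λ + N)`, and every `p` splits
as the orthogonal sum `½ (p + N p / (i|ξ|)) + ½ (p - N p / (i|ξ|))` of eigenvectors of `N` for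
`±i|ξ|`, on which the inverse acts by `(λ ∓ i|ξ|)⁻¹`. Both eigenvalues occur (project `(X, 0)` with
`0 ≠ X ∈ ℂ³_ξ`), so the norm of the inverse is the larger of the two factors. -/

open ComplexConjugate
open scoped ComplexInnerProductSpace

theorem ContinuousLinearMap.norm_le_opNorm_of_apply_eq_smul {𝕜 E : Type*}
    [NontriviallyNormedField 𝕜] [SeminormedAddCommGroup E] [NormedSpace 𝕜 E] {B : E →L[𝕜] E} {α : 𝕜} {u : E}
    (hu0 : ‖u‖ ≠ 0) (hu : B u = α • u) : ‖α‖ ≤ ‖B‖ := by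
  have h := B.le_opNorm u
  rw [hu, norm_smul] at h
  exact le_of_mul_le_mul_right h (lt_of_le_of_ne (norm_nonneg u) hu0.symm)

section InnerProduct

variable {E : Type*} [NormedAddCommGroup E] [InnerProductSpace ℂ E]

theorem ContinuousLinearMap.opNorm_le_max_of_orthogonal_eigen {B : E →L[ℂ] E} {α β : ℂ}
    (h : ∀ p, ∃ u v, p = u + v ∧ ⟪u, v⟫ = 0 ∧ B u = α • u ∧ B v = β • v) :
    ‖B‖ ≤ max ‖α‖ ‖β‖ := by
  set M := max ‖α‖ ‖β‖
  have hM : 0 ≤ M := (norm_nonneg α).trans (le_max_left _ _)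
  refine B.opNorm_le_bound hM fun p => ?_
  obtain ⟨u, v, rfl, huv, hu, hv⟩ := h p
  have pythagoras : ∀ x y : E, ⟪x, y⟫ = 0 → ‖x + y‖ ^ 2 = ‖x‖ ^ 2 + ‖y‖ ^ 2 := fun x y hxy => by
    rw [norm_add_sq (𝕜 := ℂ), hxy, map_zero, mul_zero, add_zero]
  have huv' : ⟪α • u, β • v⟫ = 0 := by
    rw [inner_smul_left, inner_smul_right, huv, mul_zero, mul_zero]
  refine (pow_le_pow_iff_left₀ (norm_nonneg _) (by positivity) two_ne_zero).mp ?_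
  calc ‖B (u + v)‖ ^ 2 = ‖α‖ ^ 2 * ‖u‖ ^ 2 + ‖β‖ ^ 2 * ‖v‖ ^ 2 := by
        rw [map_add, hu, hv, pythagoras _ _ huv',
          norm_smul, norm_smul, mul_pow, mul_pow]
    _ ≤ M ^ 2 * ‖u‖ ^ 2 + M ^ 2 * ‖v‖ ^ 2 := by
        gcongr
        exacts [le_max_left _ _, le_max_right _ _]
    _ = (M * ‖u + v‖) ^ 2 := by
        rw [mul_pow, pythagoras _ _ huv]; ring

theorem inner_eq_zero_of_skew_of_eigen {N : E →L[ℂ] E} (hN : ∀ u v, ⟪N u, v⟫ = -⟪u, N v⟫)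
    {s t : ℂ} {u v : E} (hu : N u = s • u) (hv : N v = t • v) (hst : conj s + t ≠ 0) :
    ⟪u, v⟫ = 0 := by
  have h := hN u v
  rw [hu, hv, inner_smul_left, inner_smul_right] at h
  exact (mul_eq_zero.mp (by linear_combination h : (conj s + t) * ⟪u, v⟫ = 0)).resolve_left hst

end InnerProduct

theorem Module.End.apply_add_inv_smul_apply {K V : Type*} [Field K] [AddCommGroup V] [Module K V]
    {N : Module.End K V} {t : K} (ht : t ≠ 0) (hN : ∀ p, N (N p) = t ^ 2 • p) (p : V) :
    N (p + t⁻¹ • N p) = t • (p + t⁻¹ • N p) := by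
  rw [map_add, map_smul, hN, smul_add, smul_smul, smul_smul]
  match_scalars <;> field_simp

theorem ContinuousLinearMap.resolvent_of_apply_apply_eq {𝕜 E : Type*} [NontriviallyNormedField 𝕜]
    [SeminormedAddCommGroup E] [NormedSpace 𝕜 E] {N : E →L[𝕜] E} {t l : 𝕜}
    (hN : ∀ p, N (N p) = t ^ 2 • p) (h : (l - t) * (l + t) ≠ 0) :
    (l • 1 - N).comp (((l - t) * (l + t))⁻¹ • (l • 1 + N)) = 1 ∧
      (((l - t) * (l + t))⁻¹ • (l • 1 + N)).comp (l • 1 - N) = 1 := by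
  have hl₁ : l - t ≠ 0 := left_ne_zero_of_mul h
  have hl₂ : l + t ≠ 0 := right_ne_zero_of_mul h
  constructor <;> ext p <;>
    simp only [comp_apply, sub_apply, add_apply, smul_apply, one_apply_eq_self, map_add, map_sub,
      map_smul, hN] <;>
    match_scalars <;> field_simp <;> ring

theorem ContinuousLinearMap.apply_eq_inv_smul_of_comp_eq_one {𝕜 E : Type*}
    [NontriviallyNormedField 𝕜] [SeminormedAddCommGroup E] [NormedSpace 𝕜 E]
    {N B : E →L[𝕜] E} {l s : 𝕜} (hB : B.comp (l • 1 - N) = 1) {w : E} (hw : N w = s • w) :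
    B w = (l - s)⁻¹ • w := by
  have h := congrArg (fun T : E →L[𝕜] E => T w) hB
  simp only [comp_apply, sub_apply, smul_apply, one_apply_eq_self, hw, ← sub_smul,
    map_smul] at h
  by_cases hs : l - s = 0
  · rw [hs, zero_smul] at h
    rw [← h, map_zero, smul_zero]
  · rwa [eq_inv_smul_iff₀ hs]

theorem norm_eq_max_of_comp_eq_one_of_skew {E : Type*} [NormedAddCommGroup E]
    [InnerProductSpace ℂ E] {N B : E →L[ℂ] E} {r : ℝ} (hr : r ≠ 0)
    (hskew : ∀ u v, ⟪N u, v⟫ = -⟪u, N v⟫) (hsq : ∀ p, N (N p) = (Complex.I * r) ^ 2 • p) {l : ℂ}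
    (hB : B.comp (l • 1 - N) = 1) {u v : E} (hu0 : u ≠ 0) (hu : N u = (Complex.I * r) • u)
    (hv0 : v ≠ 0) (hv : N v = -(Complex.I * r) • v) :
    ‖B‖ = max ‖l - Complex.I * r‖⁻¹ ‖l + Complex.I * r‖⁻¹ := by
  set t := Complex.I * r
  have ht : t ≠ 0 := mul_ne_zero Complex.I_ne_zero (Complex.ofReal_ne_zero.mpr hr)
  have hconj : conj t + -t ≠ 0 := by
    have : conj t = -t := by simp [t]
    rw [this, ← neg_add, neg_ne_zero, ← two_mul]
    exact mul_ne_zero two_ne_zero ht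
  have hB_pos : ∀ w, N w = t • w → B w = (l - t)⁻¹ • w := fun w =>
    ContinuousLinearMap.apply_eq_inv_smul_of_comp_eq_one hB
  have hB_neg : ∀ w, N w = -t • w → B w = (l + t)⁻¹ • w := fun w hw => by
    rw [ContinuousLinearMap.apply_eq_inv_smul_of_comp_eq_one hB hw, sub_neg_eq_add]
  have hsq' : ∀ p, N (N p) = (-t) ^ 2 • p := by simpa only [neg_sq] using hsq
  apply le_antisymm
  · rw [← norm_inv, ← norm_inv]
    refine ContinuousLinearMap.opNorm_le_max_of_orthogonal_eigen fun p => ?_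
    have hpos := Module.End.apply_add_inv_smul_apply (N := N.toLinearMap) ht hsq p
    have hneg :=
      Module.End.apply_add_inv_smul_apply (N := N.toLinearMap) (neg_ne_zero.mpr ht) hsq' p
    have hu' : N ((2 : ℂ)⁻¹ • (p + t⁻¹ • N p)) = t • ((2 : ℂ)⁻¹ • (p + t⁻¹ • N p)) := by
      rw [map_smul, ← ContinuousLinearMap.coe_coe, hpos, smul_comm]
    have hv' : N ((2 : ℂ)⁻¹ • (p + (-t)⁻¹ • N p)) = -t • ((2 : ℂ)⁻¹ • (p + (-t)⁻¹ • N p)) := by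
      rw [map_smul, ← ContinuousLinearMap.coe_coe, hneg, smul_comm]
    refine ⟨_, _, ?_, inner_eq_zero_of_skew_of_eigen hskew hu' hv' hconj, hB_pos _ hu',
      hB_neg _ hv'⟩
    rw [← smul_add, inv_neg, neg_smul, add_add_add_comm, add_neg_cancel, add_zero, ← two_smul ℂ p,
      smul_smul, inv_mul_cancel₀ two_ne_zero, one_smul]
  · refine max_le ?_ ?_
    · simpa only [norm_inv] using
        ContinuousLinearMap.norm_le_opNorm_of_apply_eq_smul (norm_ne_zero_iff.mpr hu0) (hB_pos u hu)
    · simpa only [norm_inv] using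
        ContinuousLinearMap.norm_le_opNorm_of_apply_eq_smul (norm_ne_zero_iff.mpr hv0) (hB_neg v hv)

section CrossProduct

variable (ξ : EuclideanSpace ℝ (Fin 3))

theorem crossRC_smul (c : ℂ) (b : EuclideanSpace ℂ (Fin 3)) :
    crossRC ξ (c • b) = c • crossRC ξ b := by
  ext i
  fin_cases i <;>
    simp only [crossRC, PiLp.smul_apply, smul_eq_mul, WithLp.equiv_symm_apply, Matrix.cons_val,
      Matrix.cons_val_zero, Matrix.cons_val_one, Fin.zero_eta, Fin.mk_one, Fin.reduceFinMk] <;>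
    ring

theorem crossRC_zero : crossRC ξ 0 = 0 := by
  simpa using crossRC_smul ξ 0 0

theorem crossRC_crossRC_of_mem {b : EuclideanSpace ℂ (Fin 3)} (hb : b ∈ Cxi ξ) :
    crossRC ξ (crossRC ξ b) = -((‖ξ‖ : ℂ) ^ 2) • b := by
  have hb : (ξ 0 : ℂ) * b 0 + ξ 1 * b 1 + ξ 2 * b 2 = 0 := by
    simpa [Cxi, dotLin, Fin.sum_univ_three, mul_comm] using hb
  have hnorm : (‖ξ‖ : ℂ) ^ 2 = (ξ 0 : ℂ) ^ 2 + ξ 1 ^ 2 + ξ 2 ^ 2 := by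
    rw [← Complex.ofReal_pow, EuclideanSpace.norm_sq_eq]
    simp [Fin.sum_univ_three]
  ext i
  fin_cases i <;>
    simp only [crossRC, WithLp.equiv_symm_apply, PiLp.smul_apply, smul_eq_mul, Matrix.cons_val,
      Matrix.cons_val_zero, Matrix.cons_val_one, Fin.zero_eta, Fin.mk_one, Fin.reduceFinMk, hnorm]
  · linear_combination (ξ 0 : ℂ) * hb
  · linear_combination (ξ 1 : ℂ) * hb
  · linear_combination (ξ 2 : ℂ) * hb

theorem inner_crossRC_left (y z : EuclideanSpace ℂ (Fin 3)) :
    ⟪crossRC ξ y, z⟫ = -⟪y, crossRC ξ z⟫ := by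
  simp only [crossRC, WithLp.equiv_symm_apply, PiLp.inner_apply, RCLike.inner_apply,
    Fin.sum_univ_three, Matrix.cons_val, Matrix.cons_val_zero, Matrix.cons_val_one, map_sub,
    map_mul, Complex.conj_ofReal]
  ring

theorem exists_ne_zero_Cxi : ∃ X : Cxi ξ, X ≠ 0 := by
  have hrank := LinearMap.finrank_range_add_finrank_ker (dotLin ξ)
  have hrange : Module.finrank ℂ (LinearMap.range (dotLin ξ)) ≤ 1 :=
    (Submodule.finrank_le _).trans (Module.finrank_self ℂ).le
  rw [finrank_euclideanSpace_fin] at hrank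
  exact (Module.finrank_pos_iff_exists_ne_zero (R := ℂ)).mp (by unfold Cxi; omega)

end CrossProduct

def IsN₁ (ξ : EuclideanSpace ℝ (Fin 3)) (N : CxiProd ξ →L[ℂ] CxiProd ξ) : Prop :=
  ∀ p : CxiProd ξ,
    (((N p).ofLp.1 : EuclideanSpace ℂ (Fin 3)) =
        Complex.I • crossRC ξ ((p.ofLp.2 : Cxi ξ) : EuclideanSpace ℂ (Fin 3)) ∧
     ((N p).ofLp.2 : EuclideanSpace ℂ (Fin 3)) =
        -(Complex.I • crossRC ξ ((p.ofLp.1 : Cxi ξ) : EuclideanSpace ℂ (Fin 3))))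

theorem CxiProd.ext_coe {ξ : EuclideanSpace ℝ (Fin 3)} {p q : CxiProd ξ}
    (h₁ : (p.fst : EuclideanSpace ℂ (Fin 3)) = q.fst)
    (h₂ : (p.snd : EuclideanSpace ℂ (Fin 3)) = q.snd) : p = q :=
  WithLp.ofLp_injective 2 (Prod.ext (Subtype.ext h₁) (Subtype.ext h₂))

namespace IsN₁

variable {ξ : EuclideanSpace ℝ (Fin 3)} {N : CxiProd ξ →L[ℂ] CxiProd ξ}

theorem inner_apply_left (hN : IsN₁ ξ N) (u v : CxiProd ξ) : ⟪N u, v⟫ = -⟪u, N v⟫ := by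
  obtain ⟨hu₁, hu₂⟩ := hN u
  obtain ⟨hv₁, hv₂⟩ := hN v
  simp only [WithLp.prod_inner_apply, Submodule.coe_inner, WithLp.ofLp_fst, WithLp.ofLp_snd]
    at hu₁ hu₂ hv₁ hv₂ ⊢
  rw [hu₁, hu₂, hv₁, hv₂]
  simp only [inner_neg_left, inner_neg_right, inner_smul_left, inner_smul_right,
    inner_crossRC_left, Complex.conj_I]
  ring

theorem apply_apply (hN : IsN₁ ξ N) (p : CxiProd ξ) :
    N (N p) = (Complex.I * ‖ξ‖) ^ 2 • p := by
  obtain ⟨h₁, h₂⟩ := hN p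
  obtain ⟨g₁, g₂⟩ := hN (N p)
  have hsq : (Complex.I * ‖ξ‖) ^ 2 = -((‖ξ‖ : ℂ) ^ 2) := by rw [mul_pow, Complex.I_sq, neg_one_mul]
  simp only [WithLp.ofLp_fst, WithLp.ofLp_snd] at h₁ h₂ g₁ g₂
  refine CxiProd.ext_coe ?_ ?_
  · rw [g₁, h₂, WithLp.smul_fst, Submodule.coe_smul, hsq, ← crossRC_crossRC_of_mem ξ p.fst.2,
      ← neg_smul, crossRC_smul, smul_smul, mul_neg, Complex.I_mul_I, neg_neg, one_smul]
  · rw [g₂, h₁, WithLp.smul_snd, Submodule.coe_smul, hsq, ← crossRC_crossRC_of_mem ξ p.snd.2,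
      crossRC_smul, smul_smul, Complex.I_mul_I, neg_one_smul, neg_neg]

theorem exists_eigenvector (hN : IsN₁ ξ N) (hξ : ξ ≠ 0) {s : ℂ}
    (hs : s ^ 2 = (Complex.I * ‖ξ‖) ^ 2) : ∃ u, u ≠ 0 ∧ N u = s • u := by
  have hs0 : s ≠ 0 := by
    refine ne_zero_pow two_ne_zero (hs ▸ pow_ne_zero 2 ?_)
    exact mul_ne_zero Complex.I_ne_zero (Complex.ofReal_ne_zero.mpr (norm_ne_zero_iff.mpr hξ))
  obtain ⟨X, hX⟩ := exists_ne_zero_Cxi ξ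
  set p : CxiProd ξ := WithLp.toLp 2 (X, 0)
  refine ⟨p + s⁻¹ • N p, fun h => hX ?_, Module.End.apply_add_inv_smul_apply (N := N.toLinearMap)
    hs0 (fun q => by rw [hs]; exact hN.apply_apply q) p⟩
  have hNp : ((N p).fst : EuclideanSpace ℂ (Fin 3)) = 0 := by
    simpa [p, crossRC_zero] using (hN p).1
  have hfst := congrArg (fun q : CxiProd ξ => (q.fst : EuclideanSpace ℂ (Fin 3))) h
  simpa [p, hNp] using hfst

end IsN₁

theorem stmt1 (ξ : EuclideanSpace ℝ (Fin 3)) (hξ : ξ ≠ 0) (lam : ℂ)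
    (hp : lam ≠ Complex.I * ‖ξ‖) (hm : lam ≠ -(Complex.I * ‖ξ‖))
    (N₁ : CxiProd ξ →L[ℂ] CxiProd ξ)
    (hN₁ : ∀ p : CxiProd ξ,
      (((N₁ p).ofLp.1 : EuclideanSpace ℂ (Fin 3)) =
          Complex.I • crossRC ξ ((p.ofLp.2 : Cxi ξ) : EuclideanSpace ℂ (Fin 3)) ∧
       ((N₁ p).ofLp.2 : EuclideanSpace ℂ (Fin 3)) =
          -(Complex.I • crossRC ξ ((p.ofLp.1 : Cxi ξ) : EuclideanSpace ℂ (Fin 3))))) :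
    ∃ B : CxiProd ξ →L[ℂ] CxiProd ξ,
      (lam • (1 : CxiProd ξ →L[ℂ] CxiProd ξ) - N₁).comp B = 1 ∧
      B.comp (lam • (1 : CxiProd ξ →L[ℂ] CxiProd ξ) - N₁) = 1 ∧
      ‖B‖ = max ((‖lam - Complex.I * ‖ξ‖‖)⁻¹)
              ((‖lam + Complex.I * ‖ξ‖‖)⁻¹) := by
  have hN : IsN₁ ξ N₁ := hN₁
  have ha : lam - Complex.I * ‖ξ‖ ≠ 0 := sub_ne_zero.mpr hp
  have hb : lam + Complex.I * ‖ξ‖ ≠ 0 := by rwa [← sub_neg_eq_add, sub_ne_zero]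
  obtain ⟨u, hu0, hu⟩ := hN.exists_eigenvector hξ rfl
  obtain ⟨v, hv0, hv⟩ := hN.exists_eigenvector hξ (neg_sq _)
  obtain ⟨hleft, hright⟩ :=
    ContinuousLinearMap.resolvent_of_apply_apply_eq hN.apply_apply (mul_ne_zero ha hb)
  have hn := norm_eq_max_of_comp_eq_one_of_skew (norm_ne_zero_iff.mpr hξ)
    hN.inner_apply_left hN.apply_apply hright hu0 hu hv0 hv
  refine ⟨_, hleft, hright, ?_⟩
  -- `hn` sees `CxiProd ξ` with its metric topology, the goal with the product topology;
  -- `exact` times out unfolding the two, `convert` does not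
  convert hn using 1
end
end

section
/- There exist constants ε₀ ∈ (0, 1) and C > 0 such that for every ε ∈ (0, ε₀) and every t > 0: ∫₀ᵗ ( (t−s)^{−3/4} + (t−s)^{−5/8} ) (1 + s/ε)^{−1} (1+s)^{−3/8} ds ≤ C ( ε |ln ε|⁴ (1+t)^{−5/8} + (1 + t/ε)^{−1} ). -/
open Real intervalIntegral MeasureTheory Set
set_option maxHeartbeats 1000000

section helpers
lemma kker_int (t a b : ℝ) :
    IntervalIntegrable (fun s => (t - s) ^ (-(3:ℝ)/4) + (t - s) ^ (-(5:ℝ)/8)) volume a b := by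
  have h1 : IntervalIntegrable (fun x : ℝ => x ^ (-(3:ℝ)/4)) volume (t - a) (t - b) :=
    intervalIntegrable_rpow' (by norm_num)
  have h2 : IntervalIntegrable (fun x : ℝ => x ^ (-(5:ℝ)/8)) volume (t - a) (t - b) :=
    intervalIntegrable_rpow' (by norm_num)
  simpa using (h1.comp_sub_left t).add (h2.comp_sub_left t)

lemma kker_val (t c : ℝ) :
    (∫ s in c..t, ((t-s) ^ (-(3:ℝ)/4) + (t-s) ^ (-(5:ℝ)/8)))
      = 4*(t-c) ^ ((1:ℝ)/4) + (8/3)*(t-c) ^ ((3:ℝ)/8) := by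
  have h := intervalIntegral.integral_comp_sub_left (a := c) (b := t)
    (fun u : ℝ => u ^ (-(3:ℝ)/4) + u ^ (-(5:ℝ)/8)) t
  simp only [sub_self] at h
  rw [h, intervalIntegral.integral_add (intervalIntegrable_rpow' (by norm_num))
    (intervalIntegrable_rpow' (by norm_num)),
    integral_rpow (Or.inl (by norm_num)), integral_rpow (Or.inl (by norm_num))]
  rw [show -(3:ℝ)/4 + 1 = 1/4 by norm_num, show -(5:ℝ)/8 + 1 = 3/8 by norm_num,
    Real.zero_rpow (by norm_num), Real.zero_rpow (by norm_num)]
  ring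

lemma invint (ε T : ℝ) (hε : 0 < ε) (hT : 0 ≤ T) :
    (∫ s in (0:ℝ)..T, (1 + s/ε)⁻¹) = ε * Real.log (1 + T/ε) := by
  have hεne : ε ≠ 0 := ne_of_gt hε
  have key : ∀ s : ℝ, (1 + s/ε)⁻¹ = ε * (ε + s)⁻¹ := by
    intro s
    rw [show (1 + s/ε) = (ε + s)/ε by field_simp, inv_div, div_eq_mul_inv]
  simp_rw [key]
  rw [intervalIntegral.integral_const_mul]
  have h := intervalIntegral.integral_comp_add_left (a := (0:ℝ)) (b := T)
    (fun u : ℝ => u⁻¹) ε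
  rw [h, add_zero, integral_inv (notMem_uIcc_of_lt hε (by linarith))]
  congr 1
  rw [show (ε + T)/ε = 1 + T/ε by field_simp]

lemma ab1 (a : ℝ) (ha : 0 ≤ a) : a ^ ((3:ℝ)/8) * (1+a) ^ (-(3:ℝ)/8) ≤ 1 := by
  have h1 : (0:ℝ) < 1 + a := by linarith
  rw [show -(3:ℝ)/8 = -(3/8) by norm_num, Real.rpow_neg h1.le, ← div_eq_mul_inv,
    ← Real.div_rpow ha h1.le]
  exact Real.rpow_le_one (by positivity) (by rw [div_le_one h1]; linarith) (by norm_num)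

lemma ab2 (a : ℝ) (ha : 0 ≤ a) : a ^ ((1:ℝ)/4) * (1+a) ^ (-(3:ℝ)/8) ≤ 1 := by
  have h1 : (0:ℝ) < 1 + a := by linarith
  rcases le_total a 1 with h | h
  · have := Real.rpow_le_one ha h (by norm_num : (0:ℝ) ≤ 1/4)
    have h2 : (1+a) ^ (-(3:ℝ)/8) ≤ 1 :=
      Real.rpow_le_one_of_one_le_of_nonpos (by linarith) (by norm_num)
    calc a ^ ((1:ℝ)/4) * (1+a) ^ (-(3:ℝ)/8) ≤ 1 * 1 :=
          mul_le_mul this h2 (by positivity) (by norm_num)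
      _ = 1 := by ring
  · have h3 : a ^ ((1:ℝ)/4) ≤ a ^ ((3:ℝ)/8) :=
      Real.rpow_le_rpow_of_exponent_le h (by norm_num)
    calc a ^ ((1:ℝ)/4) * (1+a) ^ (-(3:ℝ)/8) ≤ a ^ ((3:ℝ)/8) * (1+a) ^ (-(3:ℝ)/8) :=
          mul_le_mul_of_nonneg_right h3 (by positivity)
      _ ≤ 1 := ab1 a ha

lemma invhalf (ε t : ℝ) (hε : 0 < ε) (ht : 0 ≤ t) :
    (1 + (t/2)/ε)⁻¹ ≤ 2 * (1 + t/ε)⁻¹ := by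
  have h1 : (0:ℝ) < 1 + t/ε := by positivity
  have h2 : (1 + t/ε)/2 ≤ 1 + (t/2)/ε := by
    have : (t/ε)/2 = (t/2)/ε := by ring
    linarith
  calc (1 + (t/2)/ε)⁻¹ ≤ ((1 + t/ε)/2)⁻¹ := by
        apply inv_anti₀ (by positivity) h2
    _ = 2 * (1 + t/ε)⁻¹ := by rw [inv_div]; ring
end helpers

lemma key (ε t : ℝ) (hε0 : 0 < ε) (hεe : ε < Real.exp (-4)) (ht : 0 < t) :
    (∫ s in (0:ℝ)..t,
        ((t - s) ^ (-(3:ℝ)/4) + (t - s) ^ (-(5:ℝ)/8)) * (1 + s/ε)⁻¹ * (1 + s) ^ (-(3:ℝ)/8))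
      ≤ 100 * (ε * |Real.log ε| ^ 4 * (1 + t) ^ (-(5:ℝ)/8) + (1 + t/ε)⁻¹) := by
  set L := |Real.log ε| with hLdef
  have hε1 : ε < 1 := lt_trans hεe (by rw [← Real.exp_zero]; exact Real.exp_lt_exp.2 (by norm_num))
  have hlogneg : Real.log ε < -4 := by
    have := Real.log_lt_log hε0 hεe
    rwa [Real.log_exp] at this
  have hL4 : 4 < L := by
    rw [hLdef, abs_of_neg (by linarith)]; linarith
  have hL1 : (1:ℝ) ≤ L := by linarith
  have hL0 : (0:ℝ) < L := by linarith
  have hA : 0 ≤ ε * L ^ 4 * (1 + t) ^ (-(5:ℝ)/8) := by positivity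
  have hB : 0 ≤ (1 + t/ε)⁻¹ := by positivity
  -- pointwise facts
  have hfleK : ∀ s : ℝ, 0 ≤ s → s ≤ t →
      ((t - s) ^ (-(3:ℝ)/4) + (t - s) ^ (-(5:ℝ)/8)) * (1 + s/ε)⁻¹ * (1 + s) ^ (-(3:ℝ)/8)
        ≤ (t - s) ^ (-(3:ℝ)/4) + (t - s) ^ (-(5:ℝ)/8) := by
    intro s hs0 hst
    have hK : 0 ≤ (t - s) ^ (-(3:ℝ)/4) + (t - s) ^ (-(5:ℝ)/8) := by
      have : (0:ℝ) ≤ t - s := by linarith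
      positivity
    have hx : (1 + s/ε)⁻¹ ≤ 1 := by
      rw [inv_le_one_iff₀]; right; have : 0 ≤ s/ε := by positivity
      linarith
    have hy : (1 + s) ^ (-(3:ℝ)/8) ≤ 1 :=
      Real.rpow_le_one_of_one_le_of_nonpos (by linarith) (by norm_num)
    have hxnn : 0 ≤ (1 + s/ε)⁻¹ := by positivity
    have hynn : 0 ≤ (1 + s) ^ (-(3:ℝ)/8) := by positivity
    calc ((t - s) ^ (-(3:ℝ)/4) + (t - s) ^ (-(5:ℝ)/8)) * (1 + s/ε)⁻¹ * (1 + s) ^ (-(3:ℝ)/8)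
        ≤ ((t - s) ^ (-(3:ℝ)/4) + (t - s) ^ (-(5:ℝ)/8)) * 1 * 1 := by
          apply mul_le_mul _ hy hynn (by positivity)
          exact mul_le_mul_of_nonneg_left hx hK
      _ = (t - s) ^ (-(3:ℝ)/4) + (t - s) ^ (-(5:ℝ)/8) := by ring
  have hfnn : ∀ s : ℝ, 0 ≤ s → s ≤ t →
      0 ≤ ((t - s) ^ (-(3:ℝ)/4) + (t - s) ^ (-(5:ℝ)/8)) * (1 + s/ε)⁻¹ * (1 + s) ^ (-(3:ℝ)/8) := by
    intro s hs0 hst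
    have h1 : (0:ℝ) ≤ t - s := by linarith
    have h2 : (0:ℝ) < 1 + s/ε := by positivity
    positivity
  have hfint : ∀ a b : ℝ, 0 ≤ a → a ≤ b → b ≤ t →
      IntervalIntegrable (fun s =>
        ((t - s) ^ (-(3:ℝ)/4) + (t - s) ^ (-(5:ℝ)/8)) * (1 + s/ε)⁻¹ * (1 + s) ^ (-(3:ℝ)/8))
        volume a b := by
    intro a b ha hab hbt
    apply (kker_int t a b).mono_fun
    · exact (by fun_prop : Measurable (fun s : ℝ =>
        ((t - s) ^ (-(3:ℝ)/4) + (t - s) ^ (-(5:ℝ)/8)) * (1 + s/ε)⁻¹ *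
          (1 + s) ^ (-(3:ℝ)/8))).aestronglyMeasurable
    · rw [uIoc_of_le hab]
      refine (ae_restrict_iff' measurableSet_Ioc).2 (ae_of_all _ ?_)
      intro s hs
      have hs0 : 0 ≤ s := le_trans ha hs.1.le
      have hst : s ≤ t := le_trans hs.2 hbt
      have h1 : (0:ℝ) ≤ t - s := by linarith
      simp only [Real.norm_eq_abs]
      rw [abs_of_nonneg (hfnn s hs0 hst), abs_of_nonneg (by positivity)]
      exact hfleK s hs0 hst
  rcases le_or_gt t ε with hle | hlt
  · -- Case t ≤ ε : crude bound by the kernel integral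
    have hmono := intervalIntegral.integral_mono_on ht.le (hfint 0 t le_rfl ht.le le_rfl)
      (kker_int t 0 t) (fun s hs => hfleK s hs.1 hs.2)
    rw [kker_val t 0, sub_zero] at hmono
    have h14 : t ^ ((1:ℝ)/4) ≤ 1 := Real.rpow_le_one ht.le (by linarith) (by norm_num)
    have h38 : t ^ ((3:ℝ)/8) ≤ 1 := Real.rpow_le_one ht.le (by linarith) (by norm_num)
    have hBig : (2:ℝ)⁻¹ ≤ (1 + t/ε)⁻¹ := by
      apply inv_anti₀ (by positivity)
      have : t/ε ≤ 1 := (div_le_one hε0).2 hle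
      linarith
    linarith
  · -- Case ε < t
    have ht2 : 0 < t/2 := by linarith
    have ht2t : t/2 ≤ t := by linarith
    -- I₂ : the integral over [t/2, t]
    have hI2 : (∫ s in (t/2)..t,
        ((t - s) ^ (-(3:ℝ)/4) + (t - s) ^ (-(5:ℝ)/8)) * (1 + s/ε)⁻¹ * (1 + s) ^ (-(3:ℝ)/8))
        ≤ 14 * (1 + t/ε)⁻¹ := by
      have hpt : ∀ s ∈ Icc (t/2) t,
          ((t - s) ^ (-(3:ℝ)/4) + (t - s) ^ (-(5:ℝ)/8)) * (1 + s/ε)⁻¹ * (1 + s) ^ (-(3:ℝ)/8)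
            ≤ ((t - s) ^ (-(3:ℝ)/4) + (t - s) ^ (-(5:ℝ)/8)) *
              ((1 + (t/2)/ε)⁻¹ * (1 + t/2) ^ (-(3:ℝ)/8)) := by
        intro s hs
        have hs1 := hs.1
        have hs2 := hs.2
        have hs0 : (0:ℝ) ≤ s := le_trans ht2.le hs1
        have hts : (0:ℝ) ≤ t - s := by linarith
        have hK : 0 ≤ (t - s) ^ (-(3:ℝ)/4) + (t - s) ^ (-(5:ℝ)/8) := by positivity
        have e1 : (1 + s/ε)⁻¹ ≤ (1 + (t/2)/ε)⁻¹ := by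
          apply inv_anti₀ (by positivity)
          gcongr
        have e2 : (1 + s) ^ (-(3:ℝ)/8) ≤ (1 + t/2) ^ (-(3:ℝ)/8) :=
          Real.rpow_le_rpow_of_nonpos (by positivity) (by linarith) (by norm_num)
        calc ((t - s) ^ (-(3:ℝ)/4) + (t - s) ^ (-(5:ℝ)/8)) * (1 + s/ε)⁻¹ * (1 + s) ^ (-(3:ℝ)/8)
            ≤ ((t - s) ^ (-(3:ℝ)/4) + (t - s) ^ (-(5:ℝ)/8)) * (1 + (t/2)/ε)⁻¹ *
                (1 + t/2) ^ (-(3:ℝ)/8) := by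
              apply mul_le_mul _ e2 (by positivity) (by positivity)
              exact mul_le_mul_of_nonneg_left e1 hK
          _ = ((t - s) ^ (-(3:ℝ)/4) + (t - s) ^ (-(5:ℝ)/8)) *
              ((1 + (t/2)/ε)⁻¹ * (1 + t/2) ^ (-(3:ℝ)/8)) := by ring
      have hmono := intervalIntegral.integral_mono_on ht2t (hfint (t/2) t ht2.le ht2t le_rfl)
        ((kker_int t (t/2) t).mul_const _) hpt
      rw [intervalIntegral.integral_mul_const, kker_val t (t/2)] at hmono
      have harith : (4*(t - t/2) ^ ((1:ℝ)/4) + (8/3)*(t - t/2) ^ ((3:ℝ)/8)) *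
          ((1 + (t/2)/ε)⁻¹ * (1 + t/2) ^ (-(3:ℝ)/8)) ≤ 14 * (1 + t/ε)⁻¹ := by
        rw [show t - t/2 = t/2 by ring]
        have hXQ := ab2 (t/2) ht2.le
        have hYQ := ab1 (t/2) ht2.le
        have hP : (0:ℝ) ≤ (1 + (t/2)/ε)⁻¹ := by positivity
        have hP2 := invhalf ε t hε0 ht.le
        have hQ : (0:ℝ) ≤ (1 + t/2) ^ (-(3:ℝ)/8) := by positivity
        have hX : (0:ℝ) ≤ (t/2) ^ ((1:ℝ)/4) := by positivity
        have hY : (0:ℝ) ≤ (t/2) ^ ((3:ℝ)/8) := by positivity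
        nlinarith [mul_le_mul_of_nonneg_right hXQ hP, mul_le_mul_of_nonneg_right hYQ hP]
      linarith
    -- integrability of auxiliary functions
    have hhint : ∀ a b : ℝ, 0 ≤ a → 0 ≤ b →
        IntervalIntegrable (fun s : ℝ => (1 + s/ε)⁻¹ * (1 + s) ^ (-(3:ℝ)/8)) volume a b := by
      intro a b ha hb
      apply ContinuousOn.intervalIntegrable
      have hsub : uIcc a b ⊆ Ici 0 := fun s hs => le_trans (le_min ha hb) hs.1
      apply ContinuousOn.mul
      · exact ContinuousOn.inv₀ (by fun_prop) fun s hs => by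
          have : (0:ℝ) ≤ s := hsub hs
          positivity
      · exact ContinuousOn.rpow_const (by fun_prop) fun s hs => Or.inl (by
          have : (0:ℝ) ≤ s := hsub hs
          positivity)
    have hiint : ∀ a b : ℝ, 0 ≤ a → 0 ≤ b →
        IntervalIntegrable (fun s : ℝ => (1 + s/ε)⁻¹) volume a b := by
      intro a b ha hb
      apply ContinuousOn.intervalIntegrable
      have hsub : uIcc a b ⊆ Ici 0 := fun s hs => le_trans (le_min ha hb) hs.1
      exact ContinuousOn.inv₀ (by fun_prop) fun s hs => by
        have : (0:ℝ) ≤ s := hsub hs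
        positivity
    have hGnn : 0 ≤ ∫ s in (0:ℝ)..(t/2), (1 + s/ε)⁻¹ * (1 + s) ^ (-(3:ℝ)/8) := by
      apply intervalIntegral.integral_nonneg ht2.le
      intro s hs
      have : (0:ℝ) ≤ s := hs.1
      positivity
    -- I₁ : comparison on [0, t/2]
    have hI1 : (∫ s in (0:ℝ)..(t/2),
        ((t - s) ^ (-(3:ℝ)/4) + (t - s) ^ (-(5:ℝ)/8)) * (1 + s/ε)⁻¹ * (1 + s) ^ (-(3:ℝ)/8))
        ≤ ((t/2) ^ (-(3:ℝ)/4) + (t/2) ^ (-(5:ℝ)/8)) *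
          ∫ s in (0:ℝ)..(t/2), (1 + s/ε)⁻¹ * (1 + s) ^ (-(3:ℝ)/8) := by
      have hpt : ∀ s ∈ Icc (0:ℝ) (t/2),
          ((t - s) ^ (-(3:ℝ)/4) + (t - s) ^ (-(5:ℝ)/8)) * (1 + s/ε)⁻¹ * (1 + s) ^ (-(3:ℝ)/8)
            ≤ ((t/2) ^ (-(3:ℝ)/4) + (t/2) ^ (-(5:ℝ)/8)) *
              ((1 + s/ε)⁻¹ * (1 + s) ^ (-(3:ℝ)/8)) := by
        intro s hs
        have hs0 := hs.1
        have hs2 := hs.2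
        have e1 : (t - s) ^ (-(3:ℝ)/4) ≤ (t/2) ^ (-(3:ℝ)/4) :=
          Real.rpow_le_rpow_of_nonpos ht2 (by linarith) (by norm_num)
        have e2 : (t - s) ^ (-(5:ℝ)/8) ≤ (t/2) ^ (-(5:ℝ)/8) :=
          Real.rpow_le_rpow_of_nonpos ht2 (by linarith) (by norm_num)
        have hxy : 0 ≤ (1 + s/ε)⁻¹ * (1 + s) ^ (-(3:ℝ)/8) := by positivity
        calc ((t - s) ^ (-(3:ℝ)/4) + (t - s) ^ (-(5:ℝ)/8)) * (1 + s/ε)⁻¹ * (1 + s) ^ (-(3:ℝ)/8)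
            = ((t - s) ^ (-(3:ℝ)/4) + (t - s) ^ (-(5:ℝ)/8)) *
              ((1 + s/ε)⁻¹ * (1 + s) ^ (-(3:ℝ)/8)) := by ring
          _ ≤ ((t/2) ^ (-(3:ℝ)/4) + (t/2) ^ (-(5:ℝ)/8)) *
              ((1 + s/ε)⁻¹ * (1 + s) ^ (-(3:ℝ)/8)) :=
            mul_le_mul_of_nonneg_right (add_le_add e1 e2) hxy
      have hmono := intervalIntegral.integral_mono_on ht2.le (hfint 0 (t/2) le_rfl ht2.le ht2t)
        ((hhint 0 (t/2) le_rfl ht2.le).const_mul _) hpt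
      rwa [intervalIntegral.integral_const_mul] at hmono
    have hεne : ε ≠ 0 := ne_of_gt hε0
    have hlog2 : Real.log (1 + 1/ε) ≤ 2*L := by
      have h1 : (1:ℝ) ≤ 1/ε := by rw [le_div_iff₀ hε0]; linarith
      have h2 : Real.log (1+1/ε) ≤ Real.log (2/ε) := by
        have h2' : (2:ℝ)/ε = 1/ε + 1/ε := by ring
        apply Real.log_le_log (by positivity)
        linarith
      have h3 : Real.log (2/ε) = Real.log 2 - Real.log ε := Real.log_div (by norm_num) hεne
      have h4 : Real.log 2 ≤ 1 := by
        linarith [Real.log_le_sub_one_of_pos (by norm_num : (0:ℝ) < 2)]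
      have h5 : L = -Real.log ε := abs_of_neg (by linarith)
      linarith
    -- the KEY split of the full integral
    have hsplit : (∫ s in (0:ℝ)..t,
        ((t - s) ^ (-(3:ℝ)/4) + (t - s) ^ (-(5:ℝ)/8)) * (1 + s/ε)⁻¹ * (1 + s) ^ (-(3:ℝ)/8))
        = (∫ s in (0:ℝ)..(t/2),
            ((t - s) ^ (-(3:ℝ)/4) + (t - s) ^ (-(5:ℝ)/8)) * (1 + s/ε)⁻¹ * (1 + s) ^ (-(3:ℝ)/8))
          + ∫ s in (t/2)..t,
            ((t - s) ^ (-(3:ℝ)/4) + (t - s) ^ (-(5:ℝ)/8)) * (1 + s/ε)⁻¹ * (1 + s) ^ (-(3:ℝ)/8) :=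
      (intervalIntegral.integral_add_adjacent_intervals
        (hfint 0 (t/2) le_rfl ht2.le ht2t) (hfint (t/2) t ht2.le ht2t le_rfl)).symm
    rcases lt_or_ge t 2 with hts2 | hts2
    · -- regime ε < t < 2
      have hGle : (∫ s in (0:ℝ)..(t/2), (1 + s/ε)⁻¹ * (1 + s) ^ (-(3:ℝ)/8)) ≤ 2*(ε*L) := by
        have hpt : ∀ s ∈ Icc (0:ℝ) (t/2),
            (1 + s/ε)⁻¹ * (1 + s) ^ (-(3:ℝ)/8) ≤ (1 + s/ε)⁻¹ := by
          intro s hs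
          have hs0 := hs.1
          have hy : (1 + s) ^ (-(3:ℝ)/8) ≤ 1 :=
            Real.rpow_le_one_of_one_le_of_nonpos (by linarith) (by norm_num)
          exact mul_le_of_le_one_right (by positivity) hy
        have hmono := intervalIntegral.integral_mono_on ht2.le (hhint 0 (t/2) le_rfl ht2.le)
          (hiint 0 (t/2) le_rfl ht2.le) hpt
        rw [invint ε (t/2) hε0 ht2.le] at hmono
        have hlm : Real.log (1 + (t/2)/ε) ≤ Real.log (1 + 1/ε) := by
          apply Real.log_le_log (by positivity)
          have : (t/2)/ε ≤ 1/ε := by gcongr <;> linarith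
          linarith
        have := mul_le_mul_of_nonneg_left (le_trans hlm hlog2) hε0.le
        nlinarith
      have hKc : (t/2) ^ (-(3:ℝ)/4) + (t/2) ^ (-(5:ℝ)/8) ≤ 4 * t ^ (-(3:ℝ)/4) := by
        have hb1 : (t/2) ^ (-(5:ℝ)/8) ≤ (t/2) ^ (-(3:ℝ)/4) :=
          Real.rpow_le_rpow_of_exponent_ge ht2 (by linarith) (by norm_num)
        have heq : (t/2) ^ (-(3:ℝ)/4) = 2 ^ ((3:ℝ)/4) * t ^ (-(3:ℝ)/4) := by
          rw [div_eq_mul_inv t 2, Real.mul_rpow ht.le (by norm_num),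
            Real.inv_rpow (by norm_num : (0:ℝ) ≤ 2)]
          rw [show ((2:ℝ) ^ (-(3:ℝ)/4))⁻¹ = 2 ^ ((3:ℝ)/4) by
            rw [show -(3:ℝ)/4 = -(3/4) by norm_num, Real.rpow_neg (by norm_num : (0:ℝ) ≤ 2),
              inv_inv]]
          ring
        have h234 : (2:ℝ) ^ ((3:ℝ)/4) ≤ 2 := by
          calc (2:ℝ) ^ ((3:ℝ)/4) ≤ 2 ^ (1:ℝ) :=
                Real.rpow_le_rpow_of_exponent_le (by norm_num) (by norm_num)
            _ = 2 := Real.rpow_one 2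
        have htnn : (0:ℝ) ≤ t ^ (-(3:ℝ)/4) := by positivity
        nlinarith [mul_le_mul_of_nonneg_right h234 htnn]
      have hI1b : (∫ s in (0:ℝ)..(t/2),
          ((t - s) ^ (-(3:ℝ)/4) + (t - s) ^ (-(5:ℝ)/8)) * (1 + s/ε)⁻¹ * (1 + s) ^ (-(3:ℝ)/8))
          ≤ 8*ε*L*t^(-(3:ℝ)/4) := by
        calc (∫ s in (0:ℝ)..(t/2),
            ((t - s) ^ (-(3:ℝ)/4) + (t - s) ^ (-(5:ℝ)/8)) * (1 + s/ε)⁻¹ * (1 + s) ^ (-(3:ℝ)/8))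
            ≤ ((t/2) ^ (-(3:ℝ)/4) + (t/2) ^ (-(5:ℝ)/8)) *
              ∫ s in (0:ℝ)..(t/2), (1 + s/ε)⁻¹ * (1 + s) ^ (-(3:ℝ)/8) := hI1
          _ ≤ (4 * t ^ (-(3:ℝ)/4)) * (2*(ε*L)) := by
              apply mul_le_mul hKc hGle hGnn (by positivity)
          _ = 8*ε*L*t^(-(3:ℝ)/4) := by ring
      rcases le_or_gt (L ^ (-(4:ℝ))) t with hcase | hcase
      · -- t ≥ L^{-4}
        have htpow : t ^ (-(3:ℝ)/4) ≤ L ^ (3:ℕ) := by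
          have e : t ^ (-(3:ℝ)/4) ≤ (L ^ (-(4:ℝ))) ^ (-(3:ℝ)/4) :=
            Real.rpow_le_rpow_of_nonpos (by positivity) hcase (by norm_num)
          have e2 : (L ^ (-(4:ℝ))) ^ (-(3:ℝ)/4) = L ^ (3:ℕ) := by
            rw [← Real.rpow_natCast L 3, ← Real.rpow_mul hL0.le]
            norm_num
          linarith [e, e2.le, e2.ge]
        have h2 : (1+t) ^ ((5:ℝ)/8) ≤ 3 := by
          calc (1+t) ^ ((5:ℝ)/8) ≤ (1+t) ^ (1:ℝ) :=
                Real.rpow_le_rpow_of_exponent_le (by linarith) (by norm_num)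
            _ = 1+t := Real.rpow_one _
            _ ≤ 3 := by linarith
        have h3 : (3:ℝ)⁻¹ ≤ (1+t) ^ (-(5:ℝ)/8) := by
          rw [show -(5:ℝ)/8 = -(5/8) by norm_num, Real.rpow_neg (by linarith : (0:ℝ) ≤ 1+t)]
          exact inv_anti₀ (by positivity) h2
        have hfin : 8*ε*L*t^(-(3:ℝ)/4) ≤ 24 * (ε * L^4 * (1+t)^(-(5:ℝ)/8)) := by
          have h1 : 8*ε*L*t^(-(3:ℝ)/4) ≤ 8*ε*L*L^3 :=
            mul_le_mul_of_nonneg_left htpow (by positivity)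
          have h5 : 8*(ε*L^4) ≤ 24*(ε*L^4)*(1+t)^(-(5:ℝ)/8) := by
            nlinarith [mul_le_mul_of_nonneg_left h3 (by positivity : (0:ℝ) ≤ 24*(ε*L^4))]
          calc 8*ε*L*t^(-(3:ℝ)/4) ≤ 8*ε*L*L^3 := h1
            _ = 8*(ε*L^4) := by ring
            _ ≤ 24*(ε*L^4)*(1+t)^(-(5:ℝ)/8) := h5
            _ = 24*(ε*L^4*(1+t)^(-(5:ℝ)/8)) := by ring
        rw [hsplit]
        linarith
      · -- t < L^{-4}
        have h14L : t ^ ((1:ℝ)/4) * L ≤ 1 := by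
          have e : t ^ ((1:ℝ)/4) ≤ (L ^ (-(4:ℝ))) ^ ((1:ℝ)/4) :=
            Real.rpow_le_rpow ht.le hcase.le (by norm_num)
          have e2 : (L ^ (-(4:ℝ))) ^ ((1:ℝ)/4) = L⁻¹ := by
            rw [← Real.rpow_mul hL0.le]
            norm_num
            rw [show (-1 : ℝ) = ((-1 : ℤ) : ℝ) by norm_num, Real.rpow_intCast]
            norm_num
          calc t ^ ((1:ℝ)/4) * L ≤ L⁻¹ * L :=
                mul_le_mul_of_nonneg_right (e.trans_eq e2) hL0.le
            _ = 1 := inv_mul_cancel₀ (ne_of_gt hL0)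
        have hLt : L * t ^ (-(3:ℝ)/4) ≤ t⁻¹ := by
          rw [inv_eq_one_div, le_div_iff₀ ht]
          have hmul : t ^ (-(3:ℝ)/4) * t = t ^ ((1:ℝ)/4) := by
            have h' := Real.rpow_add ht (-(3:ℝ)/4) 1
            rw [Real.rpow_one] at h'
            rw [show -(3:ℝ)/4 + 1 = 1/4 by norm_num] at h'
            exact h'.symm
          calc L * t ^ (-(3:ℝ)/4) * t = t ^ ((1:ℝ)/4) * L := by
                rw [mul_assoc, hmul]; ring
            _ ≤ 1 := h14L
        have hBge : ε/(2*t) ≤ (1 + t/ε)⁻¹ := by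
          rw [show 1 + t/ε = (ε+t)/ε by field_simp, inv_div]
          apply div_le_div_of_nonneg_left hε0.le (by linarith) (by linarith)
        have hfin : 8*ε*L*t^(-(3:ℝ)/4) ≤ 16 * (1 + t/ε)⁻¹ := by
          have h2' : 8*ε*(L*t^(-(3:ℝ)/4)) ≤ 8*ε*t⁻¹ :=
            mul_le_mul_of_nonneg_left hLt (by positivity)
          have h3' : 8*ε*t⁻¹ = 16*(ε/(2*t)) := by
            rw [div_eq_mul_inv, mul_inv]
            ring
          have h4' : 16*(ε/(2*t)) ≤ 16*(1+t/ε)⁻¹ := by linarith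
          calc 8*ε*L*t^(-(3:ℝ)/4) = 8*ε*(L*t^(-(3:ℝ)/4)) := by ring
            _ ≤ 8*ε*t⁻¹ := h2'
            _ = 16*(ε/(2*t)) := h3'
            _ ≤ 16*(1+t/ε)⁻¹ := h4'
        rw [hsplit]
        linarith
    · -- regime t ≥ 2
      have ht21 : (1:ℝ) ≤ t/2 := by linarith
      have hG1 : (∫ s in (0:ℝ)..1, (1 + s/ε)⁻¹ * (1 + s) ^ (-(3:ℝ)/8)) ≤ 2*(ε*L) := by
        have hpt : ∀ s ∈ Icc (0:ℝ) 1,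
            (1 + s/ε)⁻¹ * (1 + s) ^ (-(3:ℝ)/8) ≤ (1 + s/ε)⁻¹ := by
          intro s hs
          have hs0 := hs.1
          have hy : (1 + s) ^ (-(3:ℝ)/8) ≤ 1 :=
            Real.rpow_le_one_of_one_le_of_nonpos (by linarith) (by norm_num)
          exact mul_le_of_le_one_right (by positivity) hy
        have hmono := intervalIntegral.integral_mono_on zero_le_one (hhint 0 1 le_rfl zero_le_one)
          (hiint 0 1 le_rfl zero_le_one) hpt
        rw [invint ε 1 hε0 zero_le_one] at hmono
        have hlm : ε * Real.log (1 + 1/ε) ≤ ε * (2*L) :=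
          mul_le_mul_of_nonneg_left hlog2 hε0.le
        nlinarith
      have hG2 : (∫ s in (1:ℝ)..(t/2), (1 + s/ε)⁻¹ * (1 + s) ^ (-(3:ℝ)/8)) ≤ ε*L := by
        have hpt : ∀ s ∈ Icc (1:ℝ) (t/2),
            (1 + s/ε)⁻¹ * (1 + s) ^ (-(3:ℝ)/8) ≤ ε * s ^ (-(11:ℝ)/8) := by
          intro s hs
          have hs1 := hs.1
          have hs0 : (0:ℝ) < s := by linarith
          have e1 : (1 + s/ε)⁻¹ ≤ ε * s⁻¹ := by
            have : (1 + s/ε)⁻¹ ≤ (s/ε)⁻¹ := by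
              apply inv_anti₀ (by positivity)
              linarith [div_nonneg hs0.le hε0.le]
            rw [inv_div] at this
            rw [← div_eq_mul_inv]
            exact this
          have e2 : (1 + s) ^ (-(3:ℝ)/8) ≤ s ^ (-(3:ℝ)/8) :=
            Real.rpow_le_rpow_of_nonpos hs0 (by linarith) (by norm_num)
          have e3 : s⁻¹ * s ^ (-(3:ℝ)/8) = s ^ (-(11:ℝ)/8) := by
            rw [← Real.rpow_neg_one s, ← Real.rpow_add hs0]
            norm_num
          calc (1 + s/ε)⁻¹ * (1 + s) ^ (-(3:ℝ)/8) ≤ (ε * s⁻¹) * s ^ (-(3:ℝ)/8) :=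
                mul_le_mul e1 e2 (by positivity) (by positivity)
            _ = ε * (s⁻¹ * s ^ (-(3:ℝ)/8)) := by ring
            _ = ε * s ^ (-(11:ℝ)/8) := by rw [e3]
        have hrint : IntervalIntegrable (fun s : ℝ => ε * s ^ (-(11:ℝ)/8)) volume 1 (t/2) := by
          apply IntervalIntegrable.const_mul
          exact intervalIntegrable_rpow (Or.inr (notMem_uIcc_of_lt one_pos ht2))
        have hmono := intervalIntegral.integral_mono_on ht21 (hhint 1 (t/2) zero_le_one ht2.le)
          hrint hpt
        rw [intervalIntegral.integral_const_mul,
          integral_rpow (Or.inr ⟨by norm_num, notMem_uIcc_of_lt one_pos ht2⟩)] at hmono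
        have hone : (1:ℝ) ^ (-(11:ℝ)/8 + 1) = 1 := Real.one_rpow _
        have hxnn : (0:ℝ) ≤ (t/2) ^ (-(11:ℝ)/8 + 1) := by positivity
        have hval : (((t/2) ^ (-(11:ℝ)/8+1) - 1 ^ (-(11:ℝ)/8+1))/(-(11:ℝ)/8+1)) ≤ 8/3 := by
          rw [hone]
          have heq : ((t/2) ^ (-(11:ℝ)/8+1) - 1)/(-(11:ℝ)/8+1)
              = (8/3)*(1 - (t/2) ^ (-(11:ℝ)/8+1)) := by ring
          rw [heq]
          linarith
        have h83 : ε * (8/3) ≤ ε * L := mul_le_mul_of_nonneg_left (by linarith) hε0.le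
        have hvε := mul_le_mul_of_nonneg_left hval hε0.le
        linarith
      have hGsplit : (∫ s in (0:ℝ)..(t/2), (1 + s/ε)⁻¹ * (1 + s) ^ (-(3:ℝ)/8))
          = (∫ s in (0:ℝ)..1, (1 + s/ε)⁻¹ * (1 + s) ^ (-(3:ℝ)/8))
            + ∫ s in (1:ℝ)..(t/2), (1 + s/ε)⁻¹ * (1 + s) ^ (-(3:ℝ)/8) :=
        (intervalIntegral.integral_add_adjacent_intervals (hhint 0 1 le_rfl zero_le_one)
          (hhint 1 (t/2) zero_le_one ht2.le)).symm
      have hGle : (∫ s in (0:ℝ)..(t/2), (1 + s/ε)⁻¹ * (1 + s) ^ (-(3:ℝ)/8)) ≤ 3*(ε*L) := by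
        rw [hGsplit]
        linarith
      have hKc : (t/2) ^ (-(3:ℝ)/4) + (t/2) ^ (-(5:ℝ)/8) ≤ 6 * (1+t) ^ (-(5:ℝ)/8) := by
        have hb1 : (t/2) ^ (-(3:ℝ)/4) ≤ (t/2) ^ (-(5:ℝ)/8) :=
          Real.rpow_le_rpow_of_exponent_le ht21 (by norm_num)
        have h35 : (3:ℝ) ^ ((5:ℝ)/8) ≤ 3 := by
          calc (3:ℝ) ^ ((5:ℝ)/8) ≤ 3 ^ (1:ℝ) :=
                Real.rpow_le_rpow_of_exponent_le (by norm_num) (by norm_num)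
            _ = 3 := Real.rpow_one 3
        have h12 : (1+t) ^ ((5:ℝ)/8) ≤ 3 * (t/2) ^ ((5:ℝ)/8) := by
          calc (1+t) ^ ((5:ℝ)/8) ≤ (3*(t/2)) ^ ((5:ℝ)/8) :=
                Real.rpow_le_rpow (by linarith) (by linarith) (by norm_num)
            _ = 3 ^ ((5:ℝ)/8) * (t/2) ^ ((5:ℝ)/8) :=
                Real.mul_rpow (by norm_num) ht2.le
            _ ≤ 3 * (t/2) ^ ((5:ℝ)/8) :=
                mul_le_mul_of_nonneg_right h35 (by positivity)
        have hb2 : (t/2) ^ (-(5:ℝ)/8) ≤ 3 * (1+t) ^ (-(5:ℝ)/8) := by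
          rw [show -(5:ℝ)/8 = -(5/8) by norm_num, Real.rpow_neg ht2.le,
            Real.rpow_neg (by linarith : (0:ℝ) ≤ 1+t)]
          have hp : (0:ℝ) < (1+t) ^ ((5:ℝ)/8) := by positivity
          have hq : (0:ℝ) < (t/2) ^ ((5:ℝ)/8) := by positivity
          rw [show (3:ℝ)*((1+t) ^ ((5:ℝ)/8))⁻¹ = 3/((1+t) ^ ((5:ℝ)/8)) by ring,
            inv_eq_one_div, div_le_div_iff₀ hq hp]
          nlinarith
        linarith
      have hLL : L ≤ L^4 := by
        calc L = L^1 := (pow_one L).symm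
          _ ≤ L^4 := pow_le_pow_right₀ hL1 (by norm_num)
      have hI1b : (∫ s in (0:ℝ)..(t/2),
          ((t - s) ^ (-(3:ℝ)/4) + (t - s) ^ (-(5:ℝ)/8)) * (1 + s/ε)⁻¹ * (1 + s) ^ (-(3:ℝ)/8))
          ≤ 18 * (ε * L^4 * (1+t) ^ (-(5:ℝ)/8)) := by
        calc (∫ s in (0:ℝ)..(t/2),
            ((t - s) ^ (-(3:ℝ)/4) + (t - s) ^ (-(5:ℝ)/8)) * (1 + s/ε)⁻¹ * (1 + s) ^ (-(3:ℝ)/8))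
            ≤ ((t/2) ^ (-(3:ℝ)/4) + (t/2) ^ (-(5:ℝ)/8)) *
              ∫ s in (0:ℝ)..(t/2), (1 + s/ε)⁻¹ * (1 + s) ^ (-(3:ℝ)/8) := hI1
          _ ≤ (6 * (1+t) ^ (-(5:ℝ)/8)) * (3*(ε*L)) := mul_le_mul hKc hGle hGnn (by positivity)
          _ = 18 * (ε * L * (1+t) ^ (-(5:ℝ)/8)) := by ring
          _ ≤ 18 * (ε * L^4 * (1+t) ^ (-(5:ℝ)/8)) := by
              nlinarith [mul_le_mul_of_nonneg_right hLL
                (by positivity : (0:ℝ) ≤ ε * (1+t) ^ (-(5:ℝ)/8))]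
      rw [hsplit]
      linarith

/- STATEMENT 18: there are `ε₀ ∈ (0,1)` and `C > 0` such that for every `ε ∈ (0,ε₀)` and
`t > 0`,
`∫₀ᵗ ((t−s)^{−3/4} + (t−s)^{−5/8}) (1+s/ε)^{−1} (1+s)^{−3/8} ds
  ≤ C (ε |ln ε|⁴ (1+t)^{−5/8} + (1+t/ε)^{−1})`. -/
theorem stmt18 :
    ∃ ε₀ ∈ Set.Ioo (0:ℝ) 1, ∃ C > (0:ℝ), ∀ ε : ℝ, ε ∈ Set.Ioo (0:ℝ) ε₀ → ∀ t : ℝ, 0 < t →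
      (∫ s in (0:ℝ)..t,
          ((t - s) ^ (-(3:ℝ)/4) + (t - s) ^ (-(5:ℝ)/8)) * (1 + s/ε)⁻¹ * (1 + s) ^ (-(3:ℝ)/8))
        ≤ C * (ε * |Real.log ε| ^ 4 * (1 + t) ^ (-(5:ℝ)/8) + (1 + t/ε)⁻¹) := by
  refine ⟨Real.exp (-4), ⟨Real.exp_pos _, ?_⟩, 100, by norm_num, ?_⟩
  · rw [← Real.exp_zero]
    exact Real.exp_lt_exp.2 (by norm_num)
  · rintro ε ⟨hε0, hεe⟩ t ht
    exact key ε t hε0 hεe ht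
end
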